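/- Let E be a Banach space, L : E →L[ℝ] E compact, H : ℝ × E → E continuous, and suppose (λ_j, u_j) is a sequence with u_j ≠ 0, u_j = λ_j L u_j + H(λ_j, u_j), λ_j → μ̂ in ℝ, u_j → 0 in E, and ‖H(λ,u)‖ = o(‖u‖) as ‖u‖ → 0 uniformly for λ in bounded intervals. Then there exists v ∈ E with ‖v‖ = 1 and v = μ̂ L v; in particular μ̂ is a characteristic value of L (provided μ̂ ≠ 0). -/
import Mathlib


open Filter Topology

/-- Normalization argument: if `u_j = λ_j L u_j + H(λ_j, u_j)` with `u_j ≠ 0`,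
`λ_j → μ̂`, `u_j → 0`, `L` compact linear, `H` continuous with
`‖H(λ,u)‖ = o(‖u‖)` as `‖u‖ → 0` uniformly on bounded `λ`-intervals, then
there is `v` with `‖v‖ = 1` and `v = μ̂ • L v`. -/
theorem stmt_7 {E : Type*} [NormedAddCommGroup E] [NormedSpace ℝ E] [CompleteSpace E]
    (L : E →L[ℝ] E) (hL : IsCompactOperator L)
    (H : ℝ × E → E) (hH : Continuous H)
    (hsmall : ∀ M ε : ℝ, 0 < ε → ∃ δ > 0, ∀ (lam : ℝ) (u : E),
      |lam| ≤ M → ‖u‖ ≤ δ → ‖H (lam, u)‖ ≤ ε * ‖u‖)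
    (lam : ℕ → ℝ) (u : ℕ → E) (muhat : ℝ)
    (hu0 : ∀ j, u j ≠ 0)
    (heq : ∀ j, u j = lam j • L (u j) + H (lam j, u j))
    (hlam : Tendsto lam atTop (nhds muhat))
    (hu : Tendsto u atTop (nhds 0)) :
    ∃ v : E, ‖v‖ = 1 ∧ v = muhat • L v := by
  -- normalized sequence
  set v : ℕ → E := fun j => ‖u j‖⁻¹ • u j with hv
  have hr : ∀ j, (0:ℝ) < ‖u j‖ := fun j => norm_pos_iff.mpr (hu0 j)
  have hvnorm : ∀ j, ‖v j‖ = 1 := by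
    intro j
    simp [hv, norm_smul, abs_of_pos (inv_pos.mpr (hr j)), inv_mul_cancel₀ (hr j).ne']
  -- bound on lam
  obtain ⟨M, hM⟩ := (hlam.norm).bddAbove_range
  have hMb : ∀ j, |lam j| ≤ M := fun j => hM ⟨j, rfl⟩
  -- remainder term
  set h : ℕ → E := fun j => ‖u j‖⁻¹ • H (lam j, u j) with hhdef
  have hh0 : Tendsto h atTop (nhds 0) := by
    rw [NormedAddCommGroup.tendsto_nhds_zero]
    intro ε hε
    obtain ⟨δ, hδ, hδ'⟩ := hsmall M (ε/2) (half_pos hε)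
    have : ∀ᶠ j in atTop, ‖u j‖ ≤ δ := by
      have := (NormedAddCommGroup.tendsto_nhds_zero.mp hu) δ hδ
      filter_upwards [this] with j hj using hj.le
    filter_upwards [this] with j hj
    have hb := hδ' (lam j) (u j) (hMb j) hj
    have : ‖h j‖ ≤ ε/2 := by
      rw [hhdef]
      simp only [norm_smul, norm_inv, norm_norm]
      calc ‖u j‖⁻¹ * ‖H (lam j, u j)‖ ≤ ‖u j‖⁻¹ * (ε/2 * ‖u j‖) := by
            apply mul_le_mul_of_nonneg_left hb (by positivity)
        _ = ε/2 := by
            rw [mul_comm (ε/2), ← mul_assoc, inv_mul_cancel₀ (hr j).ne', one_mul]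
    linarith
  -- rescaled equation
  have heqv : ∀ j, v j = lam j • L (v j) + h j := by
    intro j
    calc v j = ‖u j‖⁻¹ • (lam j • L (u j) + H (lam j, u j)) := by
            rw [hv]; simp only; rw [← heq j]
      _ = lam j • L (v j) + h j := by
            rw [smul_add, hv, hhdef]; simp only [map_smul]; rw [smul_comm]
  -- compactness
  have hK : IsCompact (closure (L '' Metric.closedBall 0 1)) :=
    (hL : IsCompactOperator (L : E →ₗ[ℝ] E)).isCompact_closure_image_closedBall 1
  have hmem : ∀ j, L (v j) ∈ closure (L '' Metric.closedBall 0 1) := by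
    intro j
    exact subset_closure ⟨v j, by simp [Metric.mem_closedBall, hvnorm j], rfl⟩
  obtain ⟨w, -, φ, hφ, hw⟩ := hK.tendsto_subseq hmem
  -- limit of v ∘ φ
  have hvlim : Tendsto (v ∘ φ) atTop (nhds (muhat • w)) := by
    have h1 : Tendsto (fun k => lam (φ k) • L (v (φ k)) + h (φ k)) atTop
        (nhds (muhat • w + 0)) :=
      ((hlam.comp hφ.tendsto_atTop).smul hw).add (hh0.comp hφ.tendsto_atTop)
    rw [add_zero] at h1
    exact h1.congr (fun k => (heqv (φ k)).symm)
  refine ⟨muhat • w, ?_, ?_⟩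
  · have := (continuous_norm.tendsto _).comp hvlim
    have h2 : Tendsto (fun k => ‖v (φ k)‖) atTop (nhds 1) := by
      simpa using tendsto_const_nhds.congr (fun k => (hvnorm (φ k)).symm)
    exact tendsto_nhds_unique this h2
  · have h3 : Tendsto (fun k => L (v (φ k))) atTop (nhds (L (muhat • w))) :=
      (L.continuous.tendsto _).comp hvlim
    have h4 : L (muhat • w) = w := tendsto_nhds_unique h3 hw
    rw [h4]
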